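/- arXiv:1202.5720 — 2 statements merged into one kernel-verified Lean document; each statement's English description precedes it below -/
import Mathlib

section
/- A finite simple graph G is a cover graph if its chromatic number χ(G) is strictly less than its girth g(G). -/
/-!
Fix a proper colouring `c` of `G` with `n < girth G` colours, orient every edge towards its larger
colour and order `V` by reachability along ascending walks. Colours strictly increase along an
ascending walk, so it is a path of length at most `c b - c a < n`. If `a < z < b` for an edge
`ab`, the ascending walk from `a` through `z` to `b` has length at least two and closes with `ab`
into a cycle of length at most `n`, contradicting the girth; hence the covering pairs of this order
are exactly the edges of `G`.
-/

open SimpleGraph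

/-- A graph is a *cover graph* if it is the underlying graph of the Hasse diagram of a
partially ordered set, i.e. adjacency coincides with the (symmetrized) covering relation. -/
def SimpleGraph.IsCoverGraph {V : Type*} (G : SimpleGraph V) : Prop :=
  ∃ p : PartialOrder V, ∀ a b : V,
    G.Adj a b ↔ (@CovBy V p.toPreorder.toLT a b ∨ @CovBy V p.toPreorder.toLT b a)

/-- The direct (tensor/categorical) product of two simple graphs. -/
def SimpleGraph.tensorProd {α β : Type*} (G : SimpleGraph α) (H : SimpleGraph β) :
    SimpleGraph (α × β) where
  Adj x y := G.Adj x.1 y.1 ∧ H.Adj x.2 y.2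
  symm := ⟨fun _ _ h => ⟨h.1.symm, h.2.symm⟩⟩
  loopless := ⟨fun _ h => G.loopless.irrefl _ h.1⟩

/-- The generalized Mycielskian `M_m(G)`: levels `0,…,m` (each a copy of `V`), the edges of `G`
on level `0`, edges between consecutive levels induced by the edges of `G`, and a root `none`
adjacent to all of level `m`. -/
def SimpleGraph.Myc {V : Type*} (m : ℕ) (G : SimpleGraph V) :
    SimpleGraph (Option (Fin (m + 1) × V)) where
  Adj x y :=
    match x, y with
    | some (i, j), some (k, l) =>
        G.Adj j l ∧ ((i.val = 0 ∧ k.val = 0) ∨ i.val + 1 = k.val ∨ k.val + 1 = i.val)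
    | some (i, _), none => i.val = m
    | none, some (k, _) => k.val = m
    | none, none => False
  symm := by
    refine ⟨?_⟩
    rintro (_ | ⟨i, j⟩) (_ | ⟨k, l⟩) h
    · exact h
    · exact h
    · exact h
    · exact ⟨h.1.symm, by omega⟩
  loopless := by
    refine ⟨?_⟩
    rintro (_ | ⟨i, j⟩) h
    · exact h
    · exact G.loopless.irrefl j h.1

namespace SimpleGraph

variable {V : Type*} {G : SimpleGraph V}

namespace Walk

variable {c : V → ℕ} {u v w : V}

def IsAscending (c : V → ℕ) (p : G.Walk u v) : Prop :=
  ∀ d ∈ p.darts, c d.fst < c d.snd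

@[simp]
lemma isAscending_nil : (nil : G.Walk u u).IsAscending c := by
  simp [IsAscending]

@[simp]
lemma isAscending_cons {h : G.Adj u v} {p : G.Walk v w} :
    (cons h p).IsAscending c ↔ c u < c v ∧ p.IsAscending c := by
  simp [IsAscending]

lemma IsAscending.append {p : G.Walk u v} {q : G.Walk v w} (hp : p.IsAscending c)
    (hq : q.IsAscending c) : (p.append q).IsAscending c := by
  intro d hd
  rw [darts_append, List.mem_append] at hd
  exact hd.elim (hp d) (hq d)

lemma IsAscending.add_length_le {p : G.Walk u v} (hp : p.IsAscending c) :
    c u + p.length ≤ c v := by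
  induction p with
  | nil => simp
  | cons h p ih =>
    rw [isAscending_cons] at hp
    have := ih hp.2
    rw [length_cons]
    omega

lemma IsAscending.le_of_mem_support {p : G.Walk u v} (hp : p.IsAscending c) {x : V}
    (hx : x ∈ p.support) : c u ≤ c x := by
  induction p with
  | nil => simp_all
  | cons h p ih =>
    rw [isAscending_cons] at hp
    rcases List.mem_cons.1 (support_cons h p ▸ hx) with rfl | hx
    · exact le_rfl
    · exact hp.1.le.trans (ih hp.2 hx)

lemma IsAscending.isPath {p : G.Walk u v} (hp : p.IsAscending c) : p.IsPath := by
  induction p with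
  | nil => exact .nil
  | cons h p ih =>
    rw [isAscending_cons] at hp
    refine (cons_isPath_iff h p).2 ⟨ih hp.2, fun hu => ?_⟩
    have := hp.2.le_of_mem_support hu
    omega

-- The edge `uv` closes `p` into a cycle.
lemma IsAscending.egirth_le {p : G.Walk u v} (hp : p.IsAscending c) (huv : G.Adj u v)
    (hlen : 2 ≤ p.length) : G.egirth ≤ (c v - c u + 1 : ℕ) := by
  cases p with
  | nil => simp at hlen
  | @cons _ w _ h q =>
    rw [isAscending_cons] at hp
    have hq := hp.2.add_length_le
    have hcyc : (cons huv.symm (cons h q)).IsCycle := by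
      refine (cons_isCycle_iff _ _).2 ⟨(isAscending_cons.2 hp).isPath, fun he => ?_⟩
      rw [edges_cons, List.mem_cons] at he
      rcases he with he | he
      · rw [length_cons] at hlen
        rcases Sym2.eq_iff.1 he with ⟨rfl, -⟩ | ⟨rfl, -⟩
        · exact G.loopless.irrefl _ huv
        · omega
      · have := hp.2.le_of_mem_support (q.snd_mem_support_of_mem_edges he)
        omega
    calc G.egirth ≤ (cons huv.symm (cons h q)).length := egirth_le_length hcyc
      _ ≤ (c v - c u + 1 : ℕ) := by
        simp only [length_cons, Nat.cast_le]
        omega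

end Walk

open Walk

abbrev ascendingOrder (G : SimpleGraph V) (c : V → ℕ) : PartialOrder V where
  le a b := ∃ p : G.Walk a b, p.IsAscending c
  le_refl _ := ⟨nil, isAscending_nil⟩
  le_trans _ _ _ := fun ⟨p, hp⟩ ⟨q, hq⟩ => ⟨p.append q, hp.append hq⟩
  le_antisymm a b := fun ⟨p, hp⟩ ⟨q, hq⟩ => by
    have := hp.add_length_le
    have := hq.add_length_le
    exact eq_of_length_eq_zero (p := p) (by omega)

variable {c : V → ℕ} {a b : V}

lemma adj_of_covBy_ascendingOrder (h : @CovBy V (ascendingOrder G c).toLT a b) : G.Adj a b := by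
  let := ascendingOrder G c
  obtain ⟨⟨p, hp⟩, hab⟩ := lt_iff_le_and_ne.1 h.1
  cases p with
  | nil => exact absurd rfl hab
  | @cons _ w _ had q =>
    rw [isAscending_cons] at hp
    obtain rfl : w = b := by
      by_contra hwb
      exact h.2 (lt_iff_le_and_ne.2 ⟨⟨cons had nil, by simpa using hp.1⟩, G.ne_of_adj had⟩)
        (lt_iff_le_and_ne.2 ⟨⟨q, hp.2⟩, hwb⟩)
    exact had

lemma covBy_ascendingOrder_of_adj {n : ℕ} (hc : ∀ v, c v < n) (hn : n < G.egirth)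
    (hab : G.Adj a b) (hcab : c a < c b) : @CovBy V (ascendingOrder G c).toLT a b := by
  let := ascendingOrder G c
  refine ⟨lt_iff_le_and_ne.2 ⟨⟨cons hab nil, by simpa using hcab⟩, G.ne_of_adj hab⟩, ?_⟩
  rintro z haz hzb
  obtain ⟨⟨p, hp⟩, haz⟩ := lt_iff_le_and_ne.1 haz
  obtain ⟨⟨q, hq⟩, hzb⟩ := lt_iff_le_and_ne.1 hzb
  have hp0 : p.length ≠ 0 := fun h => haz (eq_of_length_eq_zero h)
  have hq0 : q.length ≠ 0 := fun h => hzb (eq_of_length_eq_zero h)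
  have hcyc := (hp.append hq).egirth_le hab (by rw [length_append]; omega)
  have hlt : n < c b - c a + 1 := by exact_mod_cast hn.trans_le hcyc
  have := hc b
  omega

theorem isCoverGraph_of_colorable {n : ℕ} (hG : G.Colorable n) (hn : n < G.egirth) :
    G.IsCoverGraph := by
  obtain ⟨C⟩ := hG
  refine ⟨ascendingOrder G (fun v => C v), fun a b => ⟨fun hab => ?_, ?_⟩⟩
  · rcases Nat.lt_or_gt_of_ne (Fin.val_ne_of_ne (C.valid hab)) with h | h
    · exact .inl (covBy_ascendingOrder_of_adj (fun v => (C v).isLt) hn hab h)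
    · exact .inr (covBy_ascendingOrder_of_adj (fun v => (C v).isLt) hn hab.symm h)
  · rintro (h | h)
    · exact adj_of_covBy_ascendingOrder h
    · exact (adj_of_covBy_ascendingOrder h).symm

end SimpleGraph

theorem isCoverGraph_of_chromaticNumber_lt_girth_general {V : Type*} (G : SimpleGraph V)
    (h : G.chromaticNumber < G.egirth) : G.IsCoverGraph := by
  have hne : G.chromaticNumber ≠ ⊤ := h.ne_top
  refine G.isCoverGraph_of_colorable (colorable_of_chromaticNumber_ne_top hne) ?_
  rwa [ENat.natCast_toNat hne]

/-- A finite simple graph is a cover graph if its chromatic number is strictly less than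
its girth. -/
theorem isCoverGraph_of_chromaticNumber_lt_girth {V : Type*} [Fintype V] (G : SimpleGraph V)
    (h : G.chromaticNumber < G.egirth) : G.IsCoverGraph :=
  isCoverGraph_of_chromaticNumber_lt_girth_general G h
end

section
/- For s, t > 1 and m, n ≥ 1, χ_c(M_m(C_{2s+1}) × M_n(C_{2t+1})) = min{χ_c(M_m(C_{2s+1})), χ_c(M_n(C_{2t+1}))} = 4, i.e., Hedetniemi's equality holds for the circular chromatic number of these products. -/
open SimpleGraph

open scoped Classical in
/-- `D` is an acyclic orientation of `G`: every arc is an edge, each edge is oriented in exactly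
one direction, and there are no directed cycles. -/
def SimpleGraph.IsAcyclicOrientation {V : Type*} (G : SimpleGraph V) (D : V → V → Prop) : Prop :=
  (∀ a b, D a b → G.Adj a b) ∧ (∀ a b, G.Adj a b → (D a b ↔ ¬ D b a)) ∧
    ∀ a, ¬ Relation.TransGen D a a

open scoped Classical in
/-- The number of forward arcs of the cycle `C` with respect to the orientation `D`. -/
noncomputable def SimpleGraph.fwdArcs {V : Type*} (G : SimpleGraph V) (D : V → V → Prop)
    {v : V} (C : G.Walk v v) : ℕ :=
  (C.darts.filter fun d => decide (D d.toProd.1 d.toProd.2)).length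

open scoped Classical in
/-- The number of backward arcs of the cycle `C` with respect to the orientation `D`. -/
noncomputable def SimpleGraph.bwdArcs {V : Type*} (G : SimpleGraph V) (D : V → V → Prop)
    {v : V} (C : G.Walk v v) : ℕ :=
  (C.darts.filter fun d => decide (D d.toProd.2 d.toProd.1)).length

/-- The imbalance `Imb(D)` of an orientation `D`: the maximum over all cycles `C` of
`max (|C|/|(C,D)⁺|) (|C|/|(C,D)⁻|)`, with the convention that it is `2` if `G` has no cycles. -/
noncomputable def SimpleGraph.Imb {V : Type*} (G : SimpleGraph V) (D : V → V → Prop) : ℝ :=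
  sSup (insert 2 {x : ℝ | ∃ (v : V) (C : G.Walk v v), C.IsCycle ∧
    x = max ((C.length : ℝ) / (G.fwdArcs D C : ℝ)) ((C.length : ℝ) / (G.bwdArcs D C : ℝ))})

/-- The circular chromatic number, via the Goddyn–Tarsi–Zhang characterization:
the minimum imbalance over all acyclic orientations. -/
noncomputable def SimpleGraph.circChrom {V : Type*} (G : SimpleGraph V) : ℝ :=
  sInf {x : ℝ | ∃ D : V → V → Prop, G.IsAcyclicOrientation D ∧ x = G.Imb D}

/-!
Orienting each edge of a proper `k`-colouring from the smaller to the larger colour gives an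
acyclic orientation of imbalance at most `k`: along a cycle the colour rises by at most `k - 1` on
each forward arc and falls by at least one on each backward arc. Conversely, a *dependent arc*
`a → b`, i.e. one with a second directed path `a → c → ⋯ → b`, closes a cycle with a single
backward arc, so if the girth is at least `k` every acyclic orientation with a dependent arc has
imbalance at least `k`. All graphs here are 4-colourable and triangle-free, so their circular
chromatic number is `4` as soon as every acyclic orientation has a dependent arc.

For `M_m(C_{2s+1})` suppose an acyclic orientation has none. Then every 4-cycle carries two arcs
in each direction. Summing these balanced 4-cycles between consecutive levels shows that the
signed length of the zigzag closed walk between levels `j` and `j + 1` does not depend on `j`. At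
the bottom it is twice the signed length of the base cycle, which is odd, and at the top, where
the root closes the 4-cycles, it is `0`, a contradiction. The product receives a homomorphism
from `M_{max m n}(C_{2 max s t + 1})`, and orientations without dependent arcs pull back along
homomorphisms.
-/

namespace SimpleGraph

variable {V W : Type*} {G : SimpleGraph V} {H : SimpleGraph W} {D : V → V → Prop}

def HasDependentArc (D : V → V → Prop) : Prop :=
  ∃ a b c, D a b ∧ D a c ∧ Relation.TransGen D c b

/-- Equivalently, `G` is not a cover graph: the Hasse diagrams of the partial orders on `V` are
exactly the acyclic orientations without dependent arcs. -/
def ForcesDependentArc (G : SimpleGraph V) : Prop :=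
  ∀ D, G.IsAcyclicOrientation D → HasDependentArc D

open scoped Classical in
noncomputable def arcSign (D : V → V → Prop) (u v : V) : ℤ := if D u v then 1 else -1

namespace IsAcyclicOrientation

lemma adj (hD : G.IsAcyclicOrientation D) {a b : V} (h : D a b) : G.Adj a b := hD.1 a b h

lemma not_symm (hD : G.IsAcyclicOrientation D) {a b : V} (h : D a b) : ¬ D b a :=
  (hD.2.1 a b (hD.adj h)).mp h

lemma of_not (hD : G.IsAcyclicOrientation D) {a b : V} (h : G.Adj a b) (hn : ¬ D a b) : D b a :=
  (hD.2.1 b a h.symm).mpr hn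

lemma not_transGen_self (hD : G.IsAcyclicOrientation D) (a : V) : ¬ Relation.TransGen D a a :=
  hD.2.2 a

lemma arcSign_swap (hD : G.IsAcyclicOrientation D) {a b : V} (h : G.Adj a b) :
    arcSign D b a = -arcSign D a b := by
  by_cases hab : D a b
  · simp [arcSign, hab, hD.not_symm hab]
  · simp [arcSign, hab, hD.of_not h hab]

lemma not_directed_path_three (hD : G.IsAcyclicOrientation D) (hdep : ¬ HasDependentArc D)
    {p w : V} (hwp : G.Adj w p) (q r : V) : ¬ (D p q ∧ D q r ∧ D r w) := by
  rintro ⟨hpq, hqr, hrw⟩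
  by_cases hpw : D p w
  · exact hdep ⟨p, w, q, hpw, hpq, .head hqr (.single hrw)⟩
  · exact hD.not_transGen_self p
      (.head hpq (.head hqr (.head hrw (.single (hD.of_not hwp.symm hpw)))))

lemma arcSign_square (hD : G.IsAcyclicOrientation D) (hdep : ¬ HasDependentArc D) {p q r w : V}
    (hpq : G.Adj p q) (hqr : G.Adj q r) (hrw : G.Adj r w) (hwp : G.Adj w p) :
    arcSign D p q + arcSign D q r + arcSign D r w + arcSign D w p = 0 := by
  -- any three of the four edges, read in either direction, form a path closed by the fourth
  have := hD.not_directed_path_three hdep hwp q r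
  have := hD.not_directed_path_three hdep hpq r w
  have := hD.not_directed_path_three hdep hqr w p
  have := hD.not_directed_path_three hdep hrw p q
  have := hD.not_directed_path_three hdep hpq.symm w r
  have := hD.not_directed_path_three hdep hqr.symm p w
  have := hD.not_directed_path_three hdep hrw.symm q p
  have := hD.not_directed_path_three hdep hwp.symm r q
  have := hD.of_not hpq
  have := hD.of_not hqr
  have := hD.of_not hrw
  have := hD.of_not hwp
  by_cases D p q <;> by_cases D q r <;> by_cases D r w <;> by_cases D w p <;>
    simp_all [arcSign]

lemma comap (f : G →g H) {D : W → W → Prop} (hD : H.IsAcyclicOrientation D) :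
    G.IsAcyclicOrientation fun x y => G.Adj x y ∧ D (f x) (f y) := by
  have transGen_map {x y : V}
      (h : Relation.TransGen (fun x y => G.Adj x y ∧ D (f x) (f y)) x y) :
      Relation.TransGen D (f x) (f y) := h.lift f fun _ _ h => h.2
  refine ⟨fun _ _ h => h.1, fun a b hab => ⟨fun h h' => hD.not_symm h.2 h'.2, fun h => ⟨hab, ?_⟩⟩,
    fun a h => hD.not_transGen_self _ (transGen_map h)⟩
  exact hD.of_not (f.map_adj hab.symm) fun h' => h ⟨hab.symm, h'⟩

end IsAcyclicOrientation

lemma ForcesDependentArc.of_hom {K : SimpleGraph W} (f : K →g G) (hK : K.ForcesDependentArc) :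
    G.ForcesDependentArc := fun D hD => by
  obtain ⟨a, b, c, hab, hac, hcb⟩ := hK _ (hD.comap f)
  exact ⟨f a, f b, f c, hab.2, hac.2, hcb.lift f fun _ _ h => h.2⟩

namespace Walk

def IsDirected (D : V → V → Prop) {u v : V} (p : G.Walk u v) : Prop :=
  ∀ d ∈ p.darts, D d.fst d.snd

lemma isDirected_cons_iff {u x v : V} (h : G.Adj u x) (p : G.Walk x v) :
    (cons h p).IsDirected D ↔ D u x ∧ p.IsDirected D := by
  simp [IsDirected, darts_cons]

lemma IsDirected.reflTransGen {u v w : V} {p : G.Walk u v} (hp : p.IsDirected D)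
    (hw : w ∈ p.support) : Relation.ReflTransGen D u w := by
  induction p with
  | nil => rw [support_nil, List.mem_singleton] at hw; exact hw ▸ .refl
  | cons h p ih =>
    obtain ⟨hd, hp⟩ := (isDirected_cons_iff h p).1 hp
    rcases List.mem_cons.1 (support_cons h p ▸ hw) with rfl | hw
    · exact .refl
    · exact .head hd (ih hp hw)

lemma IsDirected.isPath (hD : G.IsAcyclicOrientation D) {u v : V} {p : G.Walk u v}
    (hp : p.IsDirected D) : p.IsPath := by
  induction p with
  | nil => exact .nil
  | cons h p ih =>
    obtain ⟨hd, hp⟩ := (isDirected_cons_iff h p).1 hp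
    exact (ih hp).cons fun hu => hD.not_transGen_self _ (.head' hd (hp.reflTransGen hu))

lemma IsCycle.length_le_card [Fintype V] {v : V} {C : G.Walk v v} (hC : C.IsCycle) :
    C.length ≤ Fintype.card V := by
  simpa using hC.support_nodup.length_le_card

end Walk

lemma exists_isDirected_of_transGen (hD : G.IsAcyclicOrientation D) {u v : V}
    (h : Relation.TransGen D u v) : ∃ p : G.Walk u v, p.IsDirected D := by
  induction h using Relation.TransGen.head_induction_on with
  | single h => exact ⟨.cons (hD.adj h) .nil, by simp [Walk.IsDirected, h]⟩
  | head h _ ih =>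
    obtain ⟨p, hp⟩ := ih
    exact ⟨.cons (hD.adj h) p, (Walk.isDirected_cons_iff _ _).2 ⟨h, hp⟩⟩

open scoped Classical in
lemma bwdArcs_cons_of_isDirected (hD : G.IsAcyclicOrientation D) {a b : V} (hab : D a b)
    {p : G.Walk a b} (hp : p.IsDirected D) : G.bwdArcs D (.cons (hD.adj hab).symm p) = 1 := by
  have hnil : p.darts.filter (fun d => decide (D d.snd d.fst)) = [] :=
    List.filter_eq_nil_iff.2 fun d hd => by simpa using hD.not_symm (hp d hd)
  simp [bwdArcs, Walk.darts_cons, hab, hnil]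

lemma exists_isCycle_bwdArcs_eq_one (hD : G.IsAcyclicOrientation D) (hdep : HasDependentArc D) :
    ∃ (v : V) (C : G.Walk v v), C.IsCycle ∧ G.bwdArcs D C = 1 := by
  obtain ⟨a, b, c, hab, hac, hcb⟩ := hdep
  obtain ⟨q, hq⟩ := exists_isDirected_of_transGen hD hcb
  have hp : (Walk.cons (hD.adj hac) q).IsDirected D :=
    (Walk.isDirected_cons_iff _ _).2 ⟨hac, hq⟩
  have hpath := hp.isPath hD
  refine ⟨b, _, (Walk.cons_isCycle_iff _ _).2 ⟨hpath, fun hba => ?_⟩,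
    bwdArcs_cons_of_isDirected hD hab hp⟩
  rcases List.mem_cons.1 (Walk.edges_cons _ _ ▸ hba) with hba | hba
  · rcases Sym2.eq_iff.1 hba with ⟨rfl, -⟩ | ⟨rfl, -⟩
    · exact (hD.adj hab).ne rfl
    · exact hD.not_transGen_self _ hcb
  · exact ((Walk.cons_isPath_iff _ _).1 hpath).2 (q.snd_mem_support_of_mem_edges hba)

lemma bddAbove_cycle_ratios [Fintype V] (D : V → V → Prop) :
    BddAbove (insert (2 : ℝ) {x : ℝ | ∃ (v : V) (C : G.Walk v v), C.IsCycle ∧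
      x = max ((C.length : ℝ) / (G.fwdArcs D C : ℝ)) ((C.length : ℝ) / (G.bwdArcs D C : ℝ))}) := by
  have ratio_le (L n : ℕ) : (L : ℝ) / n ≤ L := by
    rcases n.eq_zero_or_pos with rfl | hn
    · simp
    · exact div_le_self L.cast_nonneg (by exact_mod_cast hn)
  refine ⟨max 2 (Fintype.card V), ?_⟩
  rintro x (rfl | ⟨v, C, hC, rfl⟩)
  · exact le_max_left _ _
  · have hL : (C.length : ℝ) ≤ Fintype.card V := by exact_mod_cast hC.length_le_card
    exact le_max_of_le_right (max_le ((ratio_le _ _).trans hL) ((ratio_le _ _).trans hL))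

lemma Walk.IsCycle.div_bwdArcs_le_imb [Fintype V] {v : V} {C : G.Walk v v} (hC : C.IsCycle) :
    (C.length : ℝ) / G.bwdArcs D C ≤ G.Imb D :=
  (le_max_right _ _).trans (le_csSup (bddAbove_cycle_ratios D) (.inr ⟨v, C, hC, rfl⟩))

lemma le_imb_of_hasDependentArc [Fintype V] {k : ℕ} (hk : (k : ℕ∞) ≤ G.egirth)
    (hD : G.IsAcyclicOrientation D) (hdep : HasDependentArc D) : (k : ℝ) ≤ G.Imb D := by
  obtain ⟨v, C, hC, hbwd⟩ := exists_isCycle_bwdArcs_eq_one hD hdep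
  have hkC : k ≤ C.length := by exact_mod_cast hk.trans (egirth_le_length hC)
  calc (k : ℝ) ≤ C.length / G.bwdArcs D C := by rw [hbwd]; simpa using hkC
    _ ≤ G.Imb D := hC.div_bwdArcs_le_imb

namespace Coloring

variable {α : Type*} [LinearOrder α]

def orientation (C : G.Coloring α) : V → V → Prop := fun u v => G.Adj u v ∧ C u < C v

lemma isAcyclicOrientation_orientation (C : G.Coloring α) :
    G.IsAcyclicOrientation C.orientation := by
  have lt_of_transGen {u v : V} (h : Relation.TransGen C.orientation u v) : C u < C v := by
    induction h with
    | single h => exact h.2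
    | tail _ h ih => exact ih.trans h.2
  refine ⟨fun _ _ h => h.1, fun a b hab => ⟨fun h h' => h.2.asymm h'.2, fun h => ⟨hab, ?_⟩⟩,
    fun a h => (lt_of_transGen h).false⟩
  exact (C.valid hab).lt_of_le (not_lt.1 fun h' => h ⟨hab.symm, h'⟩)

open scoped Classical in
lemma add_length_le_mul {k : ℕ} (C : G.Coloring (Fin k)) {u v : V} (p : G.Walk u v) :
    (C v : ℤ) - C u + p.length ≤
        k * (p.darts.filter fun d => decide (C.orientation d.fst d.snd)).length ∧
      (C u : ℤ) - C v + p.length ≤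
        k * (p.darts.filter fun d => decide (C.orientation d.snd d.fst)).length := by
  induction p with
  | nil => simp
  | @cons a x b h p ih =>
    have ha : ((C a : ℕ) : ℤ) < k := by exact_mod_cast (C a).isLt
    have hx : ((C x : ℕ) : ℤ) < k := by exact_mod_cast (C x).isLt
    have hstep : (C.orientation a x ∧ ¬ C.orientation x a ∧ (C a : ℤ) < C x) ∨
        (C.orientation x a ∧ ¬ C.orientation a x ∧ (C x : ℤ) < C a) := by
      rcases (C.valid h).lt_or_gt with hlt | hlt
      · exact .inl ⟨⟨h, hlt⟩, fun h' => h'.2.asymm hlt, by exact_mod_cast hlt⟩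
      · exact .inr ⟨⟨h.symm, hlt⟩, fun h' => h'.2.asymm hlt, by exact_mod_cast hlt⟩
    rcases hstep with ⟨hfw, hbw, hlt⟩ | ⟨hfw, hbw, hlt⟩ <;>
      simp only [Walk.darts_cons, List.filter_cons, hfw, hbw, decide_true, decide_false,
        if_true, Bool.false_eq_true, if_false, List.length_cons, Walk.length_cons] <;>
      push_cast <;> constructor <;> linarith [ih.1, ih.2]

lemma imb_orientation_le {k : ℕ} (hk : 2 ≤ k) (C : G.Coloring (Fin k)) :
    G.Imb C.orientation ≤ k := by
  refine Real.sSup_le ?_ (by positivity)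
  rintro x (rfl | ⟨v, W, -, rfl⟩)
  · exact_mod_cast hk
  · obtain ⟨hfwd, hbwd⟩ := C.add_length_le_mul W
    simp only [sub_self, zero_add] at hfwd hbwd
    have hfwd' : (W.length : ℝ) ≤ k * G.fwdArcs C.orientation W := by exact_mod_cast hfwd
    have hbwd' : (W.length : ℝ) ≤ k * G.bwdArcs C.orientation W := by exact_mod_cast hbwd
    exact max_le (div_le_of_le_mul₀ (by positivity) (by positivity) (by linarith))
      (div_le_of_le_mul₀ (by positivity) (by positivity) (by linarith))

end Coloring

lemma circChrom_eq_of_colorable [Fintype V] {k : ℕ} (hk : 2 ≤ k) (hcol : G.Colorable k)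
    (hgirth : (k : ℕ∞) ≤ G.egirth) (hG : G.ForcesDependentArc) : G.circChrom = k := by
  obtain ⟨C⟩ := hcol
  have hlow (D) (hD : G.IsAcyclicOrientation D) : (k : ℝ) ≤ G.Imb D :=
    le_imb_of_hasDependentArc hgirth hD (hG D hD)
  have hC := C.isAcyclicOrientation_orientation
  refine IsLeast.csInf_eq ⟨⟨C.orientation, hC, ?_⟩, fun x ⟨D, hD, hx⟩ => hx ▸ hlow D hD⟩
  exact le_antisymm (hlow _ hC) (C.imb_orientation_le hk)

lemma cliqueFree_three_iff :
    G.CliqueFree 3 ↔ ∀ a b c, G.Adj a b → G.Adj a c → G.Adj b c → False := by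
  classical
  refine ⟨fun hG a b c hab hac hbc => hG _ (is3Clique_triple_iff.2 ⟨hab, hac, hbc⟩),
    fun h s hs => ?_⟩
  obtain ⟨a, b, c, hab, hac, hbc, -⟩ := is3Clique_iff.1 hs
  exact h a b c hab hac hbc

lemma CliqueFree.of_hom {n : ℕ} (f : G →g H) (hH : H.CliqueFree n) : G.CliqueFree n := by
  classical
  intro s hs
  have hinj : Set.InjOn f s := fun a ha b hb hab =>
    by_contra fun hne => (f.map_adj (hs.1 ha hb hne)).ne hab
  refine hH (s.image f) ⟨?_, by rw [Finset.card_image_of_injOn hinj, hs.2]⟩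
  rw [Finset.coe_image]
  rintro _ ⟨a, ha, rfl⟩ _ ⟨b, hb, rfl⟩ hne
  exact f.map_adj (hs.1 ha hb fun h => hne (h ▸ rfl))

lemma four_le_egirth (hG : G.CliqueFree 3) : 4 ≤ G.egirth := by
  refine le_egirth.2 fun a C hC => ?_
  have h3 : C.length ≠ 3 := fun h =>
    (is3Clique_iff_exists_cycle_length_three.2 ⟨a, C, hC, h⟩).elim fun s hs => hG s hs
  have := hC.three_le_length
  exact_mod_cast (by omega : 4 ≤ C.length)

lemma cycleGraph_adj_iff_val {N : ℕ} (hN : 2 ≤ N) {u v : Fin N} :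
    (cycleGraph N).Adj u v ↔ u.val + 1 = v.val ∨ v.val + 1 = u.val ∨
      (u.val + 1 = N ∧ v.val = 0) ∨ (v.val + 1 = N ∧ u.val = 0) := by
  rw [cycleGraph_adj']
  have hu := u.isLt
  have hv := v.isLt
  rcases lt_trichotomy u v with h | rfl | h
  · rw [Fin.coe_sub_iff_lt.2 h, Fin.coe_sub_iff_le.2 h.le]
    have : u.val < v.val := h
    omega
  · rw [Fin.coe_sub_iff_le.2 le_rfl]
    omega
  · rw [Fin.coe_sub_iff_le.2 h.le, Fin.coe_sub_iff_lt.2 h]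
    have : v.val < u.val := h
    omega

lemma cycleGraph_adj_add_one {N : ℕ} [NeZero N] (hN : 3 ≤ N) (x : Fin N) :
    (cycleGraph N).Adj x (x + 1) := by
  rw [cycleGraph_adj', add_sub_cancel_left, Fin.val_one', Nat.mod_eq_of_lt (by omega)]
  exact .inr rfl

lemma cycleGraph_adj_sub_one {N : ℕ} [NeZero N] (hN : 3 ≤ N) (x : Fin N) :
    (cycleGraph N).Adj (x - 1) x := by
  simpa only [sub_add_cancel] using cycleGraph_adj_add_one hN (x - 1)

lemma cycleGraph_cliqueFree_three {N : ℕ} (hN : 4 ≤ N) : (cycleGraph N).CliqueFree 3 :=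
  cliqueFree_three_iff.2 fun a b c hab hac hbc => by
    rw [cycleGraph_adj_iff_val (by omega)] at hab hac hbc
    have := a.isLt
    have := b.isLt
    have := c.isLt
    omega

/-- Wraps the vertices `2 * s, …, 2 * s'` alternately onto `2 * s` and `2 * s - 1`. -/
def cycleGraph.foldHom {s s' : ℕ} (hs : 1 ≤ s) (hss' : s ≤ s') :
    cycleGraph (2 * s' + 1) →g cycleGraph (2 * s + 1) where
  toFun x := ⟨if x.val < 2 * s then x.val else 2 * s - (x.val - 2 * s) % 2, by split <;> omega⟩
  map_rel' {u v} huv := by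
    rw [cycleGraph_adj_iff_val (by omega)] at huv ⊢
    have := u.isLt
    have := v.isLt
    dsimp only
    split_ifs <;> omega

def tensorProd.fst (G : SimpleGraph V) (H : SimpleGraph W) : G.tensorProd H →g G where
  toFun := Prod.fst
  map_rel' h := h.1

def Hom.tensorProdLift {U : Type*} {K : SimpleGraph U} (f : K →g G) (g : K →g H) :
    K →g G.tensorProd H where
  toFun v := (f v, g v)
  map_rel' h := ⟨f.map_adj h, g.map_adj h⟩

namespace Myc

def map (m : ℕ) (f : G →g H) : Myc m G →g Myc m H where
  toFun := Option.map fun v => (v.1, f v.2)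
  map_rel' {u v} h := by
    rcases u with _ | ⟨i, x⟩ <;> rcases v with _ | ⟨j, y⟩
    exacts [h, h, h, ⟨f.map_adj h.1, h.2⟩]

def lowerHom {m k : ℕ} (G : SimpleGraph V) (hmk : m ≤ k) : Myc k G →g Myc m G where
  toFun := Option.map fun v => (⟨v.1.val - (k - m), by omega⟩, v.2)
  map_rel' {u v} h := by
    rcases u with _ | ⟨i, x⟩ <;> rcases v with _ | ⟨j, y⟩
    · exact h
    · show j.val - (k - m) = m
      have : j.val = k := h
      omega
    · show i.val - (k - m) = m
      have : i.val = k := h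
      omega
    · refine ⟨h.1, ?_⟩
      have := h.2
      show (i.val - (k - m) = 0 ∧ j.val - (k - m) = 0) ∨ i.val - (k - m) + 1 = j.val - (k - m) ∨
        j.val - (k - m) + 1 = i.val - (k - m)
      omega

def coloring {α : Type*} (m : ℕ) (C : G.Coloring α) : (Myc m G).Coloring (Option α) :=
  Coloring.mk (Option.map fun v => C v.2) fun {u v} h => by
    rcases u with _ | ⟨i, x⟩ <;> rcases v with _ | ⟨j, y⟩
    · exact h.elim
    · simp
    · simp
    · simpa using C.valid h.1

lemma colorable (m : ℕ) {n : ℕ} (h : G.Colorable n) : (Myc m G).Colorable (n + 1) := by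
  simpa using (coloring m h.some).colorable

lemma cliqueFree_three {m : ℕ} (hm : 1 ≤ m) (hG : G.CliqueFree 3) : (Myc m G).CliqueFree 3 := by
  refine cliqueFree_three_iff.2 ?_
  rintro (_ | ⟨i, x⟩) (_ | ⟨j, y⟩) (_ | ⟨k, z⟩) hab hac hbc
  · exact hab
  · exact hab
  · exact hac
  · have : j.val = m := hab
    have : k.val = m := hac
    have := hbc.2
    omega
  · exact hbc
  · have : i.val = m := hab
    have : k.val = m := hbc
    have := hac.2
    omega
  · have : i.val = m := hac
    have : j.val = m := hbc
    have := hab.2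
    omega
  · exact cliqueFree_three_iff.1 hG x y z hab.1 hac.1 hbc.1

def vertex (m j : ℕ) (x : V) : Option (Fin (m + 1) × V) := some (⟨min j m, by omega⟩, x)

lemma adj_vertex_zero (m : ℕ) {x y : V} (h : G.Adj x y) :
    (Myc m G).Adj (vertex m 0 x) (vertex m 0 y) :=
  ⟨h, .inl (by simp)⟩

lemma adj_vertex_succ {m j : ℕ} (hj : j + 1 ≤ m) {x y : V} (h : G.Adj x y) :
    (Myc m G).Adj (vertex m j x) (vertex m (j + 1) y) :=
  ⟨h, .inr (.inl (by simp only; omega))⟩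

lemma adj_vertex_none (m : ℕ) (x : V) : (Myc m G).Adj (vertex m m x) none :=
  min_self m

end Myc

open scoped Classical in
lemma sum_arcSign_ne_zero {ι : Type*} [Fintype ι] (hodd : Odd (Fintype.card ι)) (a b : ι → V) :
    ∑ i, arcSign D (a i) (b i) ≠ 0 := by
  have hsign (i : ι) : arcSign D (a i) (b i) = 2 * (if D (a i) (b i) then 1 else 0) - 1 := by
    unfold arcSign
    split_ifs <;> norm_num
  simp only [hsign, Finset.sum_sub_distrib, ← Finset.mul_sum, Finset.sum_const, Finset.card_univ,
    nsmul_eq_mul, mul_one]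
  obtain ⟨k, hk⟩ := hodd
  rw [hk]
  push_cast
  omega

section OddCycle

open Myc

variable {m s : ℕ} {D : Option (Fin (m + 1) × Fin (2 * s + 1)) →
  Option (Fin (m + 1) × Fin (2 * s + 1)) → Prop}

/-- The signed length of the closed zigzag walk `(j, y - 1) → (j + 1, y) → (j, y + 1) → ⋯`
between levels `j` and `j + 1`; it winds twice around the cycle because `2 * s + 1` is odd. -/
noncomputable def zigzag (D : Option (Fin (m + 1) × Fin (2 * s + 1)) →
    Option (Fin (m + 1) × Fin (2 * s + 1)) → Prop) (j : ℕ) : ℤ :=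
  ∑ y, (arcSign D (vertex m j (y - 1)) (vertex m (j + 1) y) +
    arcSign D (vertex m (j + 1) y) (vertex m j (y + 1)))

/-- Sum of the balanced 4-cycles `(j + 1, y - 1), apex y, (j + 1, y + 1), (j, y)` over `y`. -/
lemma sum_apex_eq_zigzag (hs : 1 ≤ s)
    (hD : (Myc m (cycleGraph (2 * s + 1))).IsAcyclicOrientation D)
    (hdep : ¬ HasDependentArc D) {j : ℕ} (hj : j + 1 ≤ m)
    (apex : Fin (2 * s + 1) → Option (Fin (m + 1) × Fin (2 * s + 1)))
    (hl : ∀ y, (Myc m (cycleGraph (2 * s + 1))).Adj (vertex m (j + 1) (y - 1)) (apex y))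
    (hr : ∀ y, (Myc m (cycleGraph (2 * s + 1))).Adj (apex y) (vertex m (j + 1) (y + 1))) :
    ∑ y, (arcSign D (vertex m (j + 1) (y - 1)) (apex y) +
      arcSign D (apex y) (vertex m (j + 1) (y + 1))) = zigzag D j := by
  have hup (y : Fin (2 * s + 1)) := adj_vertex_succ hj (cycleGraph_adj_add_one (by omega) y)
  have hdown (y : Fin (2 * s + 1)) :=
    adj_vertex_succ hj (cycleGraph_adj_sub_one (by omega) y).symm
  have hsquares : ∑ y, (arcSign D (vertex m (j + 1) (y - 1)) (apex y) +
      arcSign D (apex y) (vertex m (j + 1) (y + 1)) +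
      arcSign D (vertex m (j + 1) (y + 1)) (vertex m j y) +
      arcSign D (vertex m j y) (vertex m (j + 1) (y - 1))) = 0 :=
    Finset.sum_eq_zero fun y _ => hD.arcSign_square hdep (hl y) (hr y) (hup y).symm (hdown y)
  have hleft : ∑ y, arcSign D (vertex m j y) (vertex m (j + 1) (y + 1)) =
      ∑ y, arcSign D (vertex m j (y - 1)) (vertex m (j + 1) y) :=
    Fintype.sum_equiv (Equiv.addRight 1) _ _ fun y => by simp
  have hright : ∑ y, arcSign D (vertex m (j + 1) y) (vertex m j (y + 1)) =
      ∑ y, arcSign D (vertex m (j + 1) (y - 1)) (vertex m j y) :=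
    Fintype.sum_equiv (Equiv.addRight 1) _ _ fun y => by simp
  have hzigzag : zigzag D j = ∑ y, arcSign D (vertex m j (y - 1)) (vertex m (j + 1) y) +
      ∑ y, arcSign D (vertex m (j + 1) y) (vertex m j (y + 1)) := Finset.sum_add_distrib
  simp only [hD.arcSign_swap (hup _), hD.arcSign_swap (hdown _).symm, Finset.sum_add_distrib,
    Finset.sum_neg_distrib] at hsquares
  rw [Finset.sum_add_distrib]
  linarith

lemma zigzag_succ (hs : 1 ≤ s) (hD : (Myc m (cycleGraph (2 * s + 1))).IsAcyclicOrientation D)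
    (hdep : ¬ HasDependentArc D) {j : ℕ} (hj : j + 2 ≤ m) : zigzag D (j + 1) = zigzag D j :=
  sum_apex_eq_zigzag hs hD hdep (by omega) (fun y => vertex m (j + 2) y)
    (fun y => adj_vertex_succ hj (cycleGraph_adj_sub_one (by omega) y))
    (fun y => (adj_vertex_succ hj (cycleGraph_adj_add_one (by omega) y).symm).symm)

lemma zigzag_eq_zigzag_zero (hs : 1 ≤ s)
    (hD : (Myc m (cycleGraph (2 * s + 1))).IsAcyclicOrientation D) (hdep : ¬ HasDependentArc D) :
    ∀ j, j + 1 ≤ m → zigzag D j = zigzag D 0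
  | 0, _ => rfl
  | j + 1, hj => (zigzag_succ hs hD hdep hj).trans (zigzag_eq_zigzag_zero hs hD hdep j (by omega))

lemma zigzag_eq_zero (hs : 1 ≤ s) (hD : (Myc m (cycleGraph (2 * s + 1))).IsAcyclicOrientation D)
    (hdep : ¬ HasDependentArc D) {j : ℕ} (hj : j + 1 = m) : zigzag D j = 0 := by
  subst hj
  rw [← sum_apex_eq_zigzag hs hD hdep le_rfl (fun _ => none) (fun y => adj_vertex_none _ _)
    (fun y => (adj_vertex_none _ _).symm)]
  have hshift : ∑ y, arcSign D (vertex (j + 1) (j + 1) (y - 1)) none =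
      ∑ y, arcSign D (vertex (j + 1) (j + 1) (y + 1)) none :=
    (Equiv.sum_comp (Equiv.subRight 1) fun y => arcSign D (vertex (j + 1) (j + 1) y) none).trans
      (Equiv.sum_comp (Equiv.addRight 1) fun y => arcSign D (vertex (j + 1) (j + 1) y) none).symm
  rw [Finset.sum_add_distrib, hshift, ← Finset.sum_add_distrib]
  exact Finset.sum_eq_zero fun y _ => by rw [hD.arcSign_swap (adj_vertex_none _ _)]; ring

lemma zigzag_zero (hs : 1 ≤ s) (hm : 1 ≤ m)
    (hD : (Myc m (cycleGraph (2 * s + 1))).IsAcyclicOrientation D) (hdep : ¬ HasDependentArc D) :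
    zigzag D 0 = 2 * ∑ y, arcSign D (vertex m 0 y) (vertex m 0 (y + 1)) := by
  have hsquares : ∑ y, (arcSign D (vertex m 0 (y - 1)) (vertex m 0 y) +
      arcSign D (vertex m 0 y) (vertex m 0 (y + 1)) +
      arcSign D (vertex m 0 (y + 1)) (vertex m 1 y) +
      arcSign D (vertex m 1 y) (vertex m 0 (y - 1))) = 0 :=
    Finset.sum_eq_zero fun y _ => hD.arcSign_square hdep
      (adj_vertex_zero m (cycleGraph_adj_sub_one (by omega) y))
      (adj_vertex_zero m (cycleGraph_adj_add_one (by omega) y))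
      (adj_vertex_succ hm (cycleGraph_adj_add_one (by omega) y).symm)
      (adj_vertex_succ hm (cycleGraph_adj_sub_one (by omega) y)).symm
  have hshift : ∑ y, arcSign D (vertex m 0 (y - 1)) (vertex m 0 y) =
      ∑ y, arcSign D (vertex m 0 y) (vertex m 0 (y + 1)) :=
    Fintype.sum_equiv (Equiv.subRight 1) _ _ fun y => by simp
  have hzigzag : zigzag D 0 = ∑ y, arcSign D (vertex m 0 (y - 1)) (vertex m 1 y) +
      ∑ y, arcSign D (vertex m 1 y) (vertex m 0 (y + 1)) := Finset.sum_add_distrib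
  simp only [hD.arcSign_swap (adj_vertex_succ hm (cycleGraph_adj_sub_one (by omega) _)),
    hD.arcSign_swap (adj_vertex_succ hm (cycleGraph_adj_add_one (by omega) _).symm).symm,
    zero_add, Finset.sum_add_distrib, Finset.sum_neg_distrib] at hsquares
  linarith

theorem myc_cycleGraph_forcesDependentArc (hs : 1 ≤ s) (hm : 1 ≤ m) :
    (Myc m (cycleGraph (2 * s + 1))).ForcesDependentArc := by
  intro D hD
  by_contra hdep
  have htop := zigzag_eq_zero hs hD hdep (j := m - 1) (by omega)
  rw [zigzag_eq_zigzag_zero hs hD hdep _ (by omega), zigzag_zero hs hm hD hdep] at htop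
  exact sum_arcSign_ne_zero (by rw [Fintype.card_fin]; exact odd_two_mul_add_one s) _ _
    (by linarith)

end OddCycle

lemma Myc.colorable_cycleGraph (m : ℕ) {s : ℕ} (hs : 1 ≤ s) :
    (Myc m (cycleGraph (2 * s + 1))).Colorable 4 := by
  simpa using colorable m (cycleGraph.tricoloring _ (by omega)).colorable

lemma Myc.cliqueFree_three_cycleGraph {m s : ℕ} (hm : 1 ≤ m) (hs : 1 < s) :
    (Myc m (cycleGraph (2 * s + 1))).CliqueFree 3 :=
  cliqueFree_three hm (cycleGraph_cliqueFree_three (by omega))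

lemma circChrom_myc_cycleGraph {m s : ℕ} (hm : 1 ≤ m) (hs : 1 < s) :
    (Myc m (cycleGraph (2 * s + 1))).circChrom = 4 := by
  exact_mod_cast circChrom_eq_of_colorable (by norm_num) (Myc.colorable_cycleGraph m (by omega))
    (four_le_egirth (Myc.cliqueFree_three_cycleGraph hm hs))
    (myc_cycleGraph_forcesDependentArc (by omega) hm)

lemma tensorProd_myc_cycleGraph_forcesDependentArc {m n s t : ℕ} (hm : 1 ≤ m) (hs : 1 ≤ s)
    (ht : 1 ≤ t) :
    ((Myc m (cycleGraph (2 * s + 1))).tensorProd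
      (Myc n (cycleGraph (2 * t + 1)))).ForcesDependentArc :=
  (myc_cycleGraph_forcesDependentArc (m := max m n) (s := max s t) (by omega) (by omega)).of_hom
    (Hom.tensorProdLift
      ((Myc.lowerHom _ (le_max_left m n)).comp
        (Myc.map _ (cycleGraph.foldHom hs (le_max_left s t))))
      ((Myc.lowerHom _ (le_max_right m n)).comp
        (Myc.map _ (cycleGraph.foldHom ht (le_max_right s t)))))

end SimpleGraph

/-- For `s, t > 1` and `m, n ≥ 1`, Hedetniemi's equality holds for the circular chromatic
number of `M_m(C_{2s+1}) × M_n(C_{2t+1})`, and the common value is `4`. -/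
theorem circChrom_tensorProd_myc (m n s t : ℕ)
    (hm : 1 ≤ m) (hn : 1 ≤ n) (hs : 1 < s) (ht : 1 < t) :
    ((SimpleGraph.Myc m (cycleGraph (2 * s + 1))).tensorProd
        (SimpleGraph.Myc n (cycleGraph (2 * t + 1)))).circChrom =
      min (SimpleGraph.Myc m (cycleGraph (2 * s + 1))).circChrom
        (SimpleGraph.Myc n (cycleGraph (2 * t + 1))).circChrom ∧
    ((SimpleGraph.Myc m (cycleGraph (2 * s + 1))).tensorProd
        (SimpleGraph.Myc n (cycleGraph (2 * t + 1)))).circChrom = 4 := by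
  have hG := circChrom_myc_cycleGraph hm hs
  have hH := circChrom_myc_cycleGraph hn ht
  have hprod : ((SimpleGraph.Myc m (cycleGraph (2 * s + 1))).tensorProd
      (SimpleGraph.Myc n (cycleGraph (2 * t + 1)))).circChrom = 4 := by
    exact_mod_cast circChrom_eq_of_colorable (by norm_num)
      ((Myc.colorable_cycleGraph m (by omega)).of_hom (tensorProd.fst _ _))
      (four_le_egirth ((Myc.cliqueFree_three_cycleGraph hm hs).of_hom (tensorProd.fst _ _)))
      (tensorProd_myc_cycleGraph_forcesDependentArc (n := n) (t := t) hm (by omega) (by omega))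
  exact ⟨by rw [hprod, hG, hH, min_self], hprod⟩
end
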